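/- arXiv:1204.1047 — 2 statements merged into one kernel-verified Lean document; each statement's English description precedes it below -/
import Mathlib

section
/- Let a group G act on a set Y such that every orbit is infinite, and let w₁, …, wₙ be finitely many distinct points of Y. Then there exists a sequence (gᵢ)_{i=0}^∞ in G such that the points gᵢ·wⱼ (i ≥ 0, 1 ≤ j ≤ n) are pairwise distinct. -/
/-!
For a finite set `s`, the elements `g` moving some `wⱼ` into `s` form a finite union of left
cosets of the stabilizers of the `wⱼ`. These stabilizers have infinite index, so by
B. H. Neumann's lemma that union is not all of `G`: some `g` moves every `wⱼ` off `s`.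
Applying this with `s` the finitely many points `gₖ • wⱼ` chosen so far builds the sequence
inductively.
-/

open Function MulAction Pointwise

namespace MulAction

variable {G X : Type*} [Group G] [MulAction G X]

theorem orbit_finite_of_finiteIndex_stabilizer (x : X) [(stabilizer G x).FiniteIndex] :
    (orbit G x).Finite :=
  Set.finite_coe_iff.mp (Finite.of_equiv _ (orbitEquivQuotientStabilizer G x).symm)

theorem mem_leftCoset_stabilizer_of_smul_eq {x : X} {g₀ g : G} (h : g • x = g₀ • x) :
    g ∈ g₀ • (stabilizer G x : Set G) := by
  rw [mem_leftCoset_iff, SetLike.mem_coe, mem_stabilizer_iff, mul_smul, inv_smul_eq_iff, h]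

theorem exists_forall_smul_notMem_of_orbit_infinite {ι : Type*} [Finite ι] {x : ι → X}
    (hx : ∀ i, (orbit G (x i)).Infinite) {s : Set X} (hs : s.Finite) :
    ∃ g : G, ∀ i, g • x i ∉ s := by
  classical
  have := Fintype.ofFinite ι
  have := hs.fintype
  by_contra! hcover
  have hrep : ∀ p : ι × s, ∃ g₀ : G, ∀ g : G, g • x p.1 = p.2 →
      g ∈ g₀ • (stabilizer G (x p.1) : Set G) := by
    rintro ⟨i, y⟩
    by_cases hy : ∃ g₀ : G, g₀ • x i = y
    · obtain ⟨g₀, hg₀⟩ := hy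
      exact ⟨g₀, fun g hg => mem_leftCoset_stabilizer_of_smul_eq (hg.trans hg₀.symm)⟩
    · exact ⟨1, fun g hg => absurd ⟨g, hg⟩ hy⟩
  choose g₀ hg₀ using hrep
  have hunion : ⋃ p ∈ (Finset.univ : Finset (ι × s)),
      g₀ p • (stabilizer G (x p.1) : Set G) = Set.univ := by
    refine Set.eq_univ_of_forall fun g => ?_
    obtain ⟨i, hi⟩ := hcover g
    exact Set.mem_biUnion (Finset.mem_coe.mpr (Finset.mem_univ (i, ⟨_, hi⟩))) (hg₀ _ g rfl)
  obtain ⟨⟨i, _⟩, -, hfin⟩ := Subgroup.exists_finiteIndex_of_leftCoset_cover hunion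
  exact hx i (orbit_finite_of_finiteIndex_stabilizer (x i))

theorem exists_seq_pairwise_disjoint_range_smul {ι : Type*} [Finite ι] {x : ι → X}
    (hx : ∀ i, (orbit G (x i)).Infinite) :
    ∃ g : ℕ → G, Pairwise (Disjoint on (fun k => Set.range fun i => g k • x i)) := by
  have : Std.Symm (Disjoint on (fun g : G => Set.range fun i => g • x i)) :=
    ⟨fun _ _ h => h.symm⟩
  obtain ⟨g, -, hg⟩ := exists_seq_of_forall_finset_exists' (fun _ => True)
    (Disjoint on (fun g : G => Set.range fun i => g • x i)) fun t _ => by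
      have hfin : (⋃ a ∈ t, Set.range fun i => a • x i).Finite :=
        t.finite_toSet.biUnion fun _ _ => Set.finite_range _
      obtain ⟨g, hg⟩ := exists_forall_smul_notMem_of_orbit_infinite hx hfin
      refine ⟨g, trivial, fun a ha => Set.disjoint_left.mpr ?_⟩
      rintro _ ⟨i, rfl⟩ ⟨j, hj⟩
      exact hg j (Set.mem_biUnion ha ⟨i, hj.symm⟩)
  exact ⟨g, hg⟩

end MulAction

/-- If every orbit of a group action of `G` on `Y` is infinite, then for any finitely
many distinct points `w₁, …, wₙ` there is a sequence `(gᵢ)` in `G` such that the points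
`gᵢ • wⱼ` are pairwise distinct. -/
theorem stmt2 {G Y : Type*} [Group G] [MulAction G Y]
    (horb : ∀ w : Y, (MulAction.orbit G w).Infinite)
    (n : ℕ) (w : Fin n → Y) (hw : Function.Injective w) :
    ∃ g : ℕ → G, Function.Injective (fun p : ℕ × Fin n => g p.1 • w p.2) := by
  obtain ⟨g, hg⟩ := exists_seq_pairwise_disjoint_range_smul fun j => horb (w j)
  refine ⟨g, fun ⟨k, i⟩ ⟨l, j⟩ h => ?_⟩
  obtain rfl | hkl := eq_or_ne k l
  · exact congrArg _ (hw (smul_left_cancel (g k) h))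
  · exact absurd h ((hg hkl).ne_of_mem (Set.mem_range_self i) (Set.mem_range_self j))
end

section
/- In a geodesic metric space Y, suppose there exist a point p and radii r < R such that: (a) every point of Y is within distance r of some point in the orbit of p under a group G acting by isometries, and (b) for any two points x, y in the same connected component of Y ∖ B(p,R), the geodesic segment [x,y] does not meet B(p,r). Then Y satisfies the Bottleneck Property: there exists Δ > 0 such that for all x, y ∈ Y, the midpoint m of a geodesic [x,y] has the property that every path from x to y passes within distance Δ of m. -/
/-!
Translate a path that stays far from the midpoint `m` of a geodesic `[x,y]` by an isometry
moving `m` into `B(p,r)`. If the path avoids `B(m, R + r)`, its translate avoids `B(p,R)`,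
so the translated endpoints lie in one path component of `Y ∖ B(p,R)`; yet the translated
geodesic passes through the image of `m`, which lies in `B(p,r)`.
-/

/-- `γ` is a geodesic segment from `x` to `y`, parametrized by arclength on
`[0, dist x y]`. -/
def IsGeodSeg {Y : Type*} [MetricSpace Y] (γ : ℝ → Y) (x y : Y) : Prop :=
  γ 0 = x ∧ γ (dist x y) = y ∧
    ∀ s ∈ Set.Icc (0:ℝ) (dist x y), ∀ t ∈ Set.Icc (0:ℝ) (dist x y),
      dist (γ s) (γ t) = |s - t|

open Metric Set

lemma half_dist_mem_Icc {X : Type*} [MetricSpace X] (x y : X) :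
    dist x y / 2 ∈ Icc 0 (dist x y) :=
  ⟨by positivity, by linarith [dist_nonneg (x := x) (y := y)]⟩

namespace IsGeodSeg

variable {X Z : Type*} [MetricSpace X] [MetricSpace Z] {γ : ℝ → X} {x y : X}

lemma dist_source_midpoint (hγ : IsGeodSeg γ x y) :
    dist x (γ (dist x y / 2)) = dist x y / 2 := by
  have h := hγ.2.2 0 ⟨le_rfl, dist_nonneg⟩ _ (half_dist_mem_Icc x y)
  rw [hγ.1] at h
  rw [h, zero_sub, abs_neg, abs_of_nonneg (half_dist_mem_Icc x y).1]

lemma dist_target_midpoint (hγ : IsGeodSeg γ x y) :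
    dist y (γ (dist x y / 2)) = dist x y / 2 := by
  have h := hγ.2.2 (dist x y) ⟨dist_nonneg, le_rfl⟩ _ (half_dist_mem_Icc x y)
  rw [hγ.2.1] at h
  rw [h, abs_of_nonneg (by linarith [(half_dist_mem_Icc x y).1])]
  ring

lemma comp_isometry (hγ : IsGeodSeg γ x y) {f : X → Z} (hf : Isometry f) :
    IsGeodSeg (f ∘ γ) (f x) (f y) := by
  obtain ⟨h0, h1, hdist⟩ := hγ
  refine ⟨by simp [h0], by simp [hf.dist_eq, h1], fun s hs t ht => ?_⟩
  rw [hf.dist_eq] at hs ht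
  simp only [Function.comp_apply, hf.dist_eq, hdist s hs t ht]

end IsGeodSeg

lemma Isometry.image_compl_ball_subset {Y Z : Type*} [MetricSpace Y] [MetricSpace Z] {f : Y → Z}
    (hf : Isometry f) {m : Y} {p : Z} {r R : ℝ} (hm : dist (f m) p < r) :
    f '' (ball m (R + r))ᶜ ⊆ (ball p R)ᶜ := by
  rintro _ ⟨z, hz, rfl⟩
  simp only [mem_compl_iff, mem_ball, not_lt] at hz ⊢
  have := dist_triangle (f z) p (f m)
  rw [hf.dist_eq, dist_comm p] at this
  linarith

theorem IsGeodSeg.exists_dist_path_midpoint_lt {Y : Type*} [MetricSpace Y] {p : Y} {r R Δ : ℝ}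
    (hΔ : R + r ≤ Δ) (htrans : ∀ m : Y, ∃ f : Y → Y, Isometry f ∧ dist (f m) p < r)
    (hsep : ∀ x y : Y, x ∉ ball p R → y ∉ ball p R → JoinedIn (ball p R)ᶜ x y →
      ∀ γ : ℝ → Y, IsGeodSeg γ x y → ∀ t ∈ Icc (0:ℝ) (dist x y), γ t ∉ ball p r)
    {x y : Y} {γ : ℝ → Y} (hγ : IsGeodSeg γ x y) (c : Path x y) :
    ∃ t, dist (c t) (γ (dist x y / 2)) < Δ := by
  by_contra! hfar
  obtain ⟨f, hf, hfm⟩ := htrans (γ (dist x y / 2))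
  have hout : JoinedIn (ball (γ (dist x y / 2)) (R + r))ᶜ x y :=
    ⟨c, fun t => by simpa using hΔ.trans (hfar t)⟩
  have hjoin : JoinedIn (ball p R)ᶜ (f x) (f y) :=
    (hout.map hf.continuous).mono (hf.image_compl_ball_subset hfm)
  refine hsep _ _ hjoin.source_mem hjoin.target_mem hjoin _ (hγ.comp_isometry hf) _ ?_ hfm
  rw [hf.dist_eq]
  exact half_dist_mem_Icc x y

theorem stmt4_general {Y G : Type*} [MetricSpace Y] [Group G] [MulAction G Y]
    (hiso : ∀ g : G, Isometry (fun y : Y => g • y))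
    (p : Y) (r R : ℝ)
    (hgeod : ∀ x y : Y, ∃ γ : ℝ → Y, IsGeodSeg γ x y)
    (hcov : ∀ y : Y, ∃ g : G, dist y (g • p) < r)
    (hsep : ∀ x y : Y, x ∉ Metric.ball p R → y ∉ Metric.ball p R →
      JoinedIn (Metric.ball p R)ᶜ x y →
      ∀ γ : ℝ → Y, IsGeodSeg γ x y →
        ∀ t ∈ Set.Icc (0:ℝ) (dist x y), γ t ∉ Metric.ball p r) :
    ∃ Δ > (0:ℝ), ∀ x y : Y, ∃ m : Y,
      dist x m = dist x y / 2 ∧ dist y m = dist x y / 2 ∧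
      ∀ c : Path x y, ∃ t, dist (c t) m < Δ := by
  have htrans : ∀ m : Y, ∃ f : Y → Y, Isometry f ∧ dist (f m) p < r := fun m => by
    obtain ⟨g, hg⟩ := hcov m
    refine ⟨(g⁻¹ • ·), hiso g⁻¹, ?_⟩
    rwa [← (hiso g).dist_eq, smul_inv_smul]
  refine ⟨max (R + r) 1, by positivity, fun x y => ?_⟩
  obtain ⟨γ, hγ⟩ := hgeod x y
  exact ⟨_, hγ.dist_source_midpoint, hγ.dist_target_midpoint,
    hγ.exists_dist_path_midpoint_lt (le_max_left _ _) htrans hsep⟩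

/-- If `Y` is a geodesic space, `G` acts by isometries with the orbit of `B(p,r)`
covering `Y`, and whenever `x, y` lie in the same path component of `Y ∖ B(p,R)` the
geodesic `[x,y]` misses `B(p,r)`, then `Y` has Manning's Bottleneck Property: there is
`Δ > 0` such that for all `x, y` there is a midpoint `m` of `[x,y]` with every path
from `x` to `y` passing within distance less than `Δ` of `m`. -/
theorem stmt4 {Y G : Type*} [MetricSpace Y] [Group G] [MulAction G Y]
    (hiso : ∀ g : G, Isometry (fun y : Y => g • y))
    (p : Y) (r R : ℝ) (hr : 0 < r) (hrR : r < R)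
    (hgeod : ∀ x y : Y, ∃ γ : ℝ → Y, IsGeodSeg γ x y)
    (hcov : ∀ y : Y, ∃ g : G, dist y (g • p) < r)
    (hsep : ∀ x y : Y, x ∉ Metric.ball p R → y ∉ Metric.ball p R →
      JoinedIn (Metric.ball p R)ᶜ x y →
      ∀ γ : ℝ → Y, IsGeodSeg γ x y →
        ∀ t ∈ Set.Icc (0:ℝ) (dist x y), γ t ∉ Metric.ball p r) :
    ∃ Δ > (0:ℝ), ∀ x y : Y, ∃ m : Y,
      dist x m = dist x y / 2 ∧ dist y m = dist x y / 2 ∧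
      ∀ c : Path x y, ∃ t, dist (c t) m < Δ :=
  stmt4_general hiso p r R hgeod hcov hsep
end
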